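/- Let K be a compact metric space and let {fᵂ}_{ω ∈ K} be a family of C² functions on the closed unit ball B̄ᵏ ⊂ ℝᵏ depending continuously on ω in the C² topology, such that for a fixed c₀ ∈ (0,1): each fᵂ has a unique maximum point m(ω) with |m(ω)| ≤ c₀/√10, and −(1/c₀)Id ≤ D²fᵂ(u) ≤ −c₀·Id for all u ∈ B̄ᵏ. Let φᵂ(·, t) be the flow of −(1−|u|²)∇fᵂ(u). Then for any δ < 1/4 there exists T ≥ 0 such that for all ω ∈ K and all v ∈ B̄ᵏ with |v − m(ω)| ≥ δ, one has fᵂ(φᵂ(v, T)) < fᵂ(0) − c₀/10 and |φᵂ(v, T)| > c₀/4. -/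

import Mathlib

open Metric Set Topology



private lemma auxBound {F F' : ℝ → ℝ} {a b C : ℝ} (hab : a ≤ b)
    (hd : ∀ t ∈ Set.Icc a b, HasDerivWithinAt F (F' t) (Set.Icc a b) t)
    (h0 : ∀ t ∈ Set.Icc a b, F' t ≤ C) : F b ≤ F a + C * (b - a) := by
  have key : ∀ t ∈ Set.Icc a b, HasDerivWithinAt (fun s => F s - C * s) (F' t - C)
      (Set.Icc a b) t := by
    intro t ht
    have := (hd t ht).sub ((hasDerivAt_id' t).const_mul C).hasDerivWithinAt
    rw [mul_one] at this
    exact this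
  have hcont : ContinuousOn (fun s => F s - C * s) (Set.Icc a b) :=
    fun t ht => (key t ht).continuousWithinAt
  have hanti : AntitoneOn (fun s => F s - C * s) (Set.Icc a b) := by
    apply antitoneOn_of_hasDerivWithinAt_nonpos (convex_Icc a b) hcont
      (f' := fun t => F' t - C)
    · intro x hx
      exact (key x (interior_subset hx)).mono interior_subset
    · intro x hx
      have := h0 x (interior_subset hx)
      linarith
  have := hanti (Set.left_mem_Icc.2 hab) (Set.right_mem_Icc.2 hab) hab
  simp only at this
  linarith

private lemma segEst {k : ℕ} {F : EuclideanSpace ℝ (Fin k) → ℝ}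
    {F' : EuclideanSpace ℝ (Fin k) → (EuclideanSpace ℝ (Fin k) →L[ℝ] ℝ)}
    {F'' : EuclideanSpace ℝ (Fin k) →
      (EuclideanSpace ℝ (Fin k) →L[ℝ] EuclideanSpace ℝ (Fin k) →L[ℝ] ℝ)}
    {c₀ : ℝ} (hc : 0 < c₀)
    (hdF : ∀ u ∈ closedBall (0 : EuclideanSpace ℝ (Fin k)) 1,
      HasFDerivWithinAt F (F' u) (closedBall 0 1) u)
    (hdF' : ∀ u ∈ closedBall (0 : EuclideanSpace ℝ (Fin k)) 1,
      HasFDerivWithinAt F' (F'' u) (closedBall 0 1) u)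
    (hH : ∀ u ∈ closedBall (0 : EuclideanSpace ℝ (Fin k)) 1,
      ∀ w : EuclideanSpace ℝ (Fin k),
        -(1 / c₀) * ‖w‖ ^ 2 ≤ F'' u w w ∧ F'' u w w ≤ -c₀ * ‖w‖ ^ 2)
    {M : EuclideanSpace ℝ (Fin k)} (hM : M ∈ closedBall (0 : EuclideanSpace ℝ (Fin k)) 1)
    (hM0 : F' M = 0)
    {u : EuclideanSpace ℝ (Fin k)} (hu : u ∈ closedBall (0 : EuclideanSpace ℝ (Fin k)) 1) :
    F' u (u - M) ≤ -c₀ * ‖u - M‖ ^ 2 ∧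
    F u ≤ F M - c₀ / 2 * ‖u - M‖ ^ 2 ∧
    F M - 1 / (2 * c₀) * ‖u - M‖ ^ 2 ≤ F u := by
  set w : EuclideanSpace ℝ (Fin k) := u - M with hw
  set γ : ℝ → EuclideanSpace ℝ (Fin k) := fun s => M + s • w with hγ
  have hγmem : ∀ s ∈ Set.Icc (0:ℝ) 1, γ s ∈ closedBall (0 : EuclideanSpace ℝ (Fin k)) 1 :=
    fun s hs => (convex_closedBall (0 : EuclideanSpace ℝ (Fin k)) 1).add_smul_sub_mem hM hu hs
  have hγmaps : Set.MapsTo γ (Set.Icc (0:ℝ) 1) (closedBall (0 : EuclideanSpace ℝ (Fin k)) 1) :=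
    fun s hs => hγmem s hs
  have hγd : ∀ s : ℝ, HasDerivWithinAt γ w (Set.Icc (0:ℝ) 1) s := by
    intro s
    have : HasDerivAt γ w s := by
      have h := ((hasDerivAt_id' s).smul_const w).const_add M
      rw [one_smul] at h
      exact h
    exact this.hasDerivWithinAt
  have hγ0 : γ 0 = M := by simp [hγ]
  have hγ1 : γ 1 = u := by simp [hγ, hw]
  -- derivative of s ↦ F' (γ s) w
  have hh : ∀ s ∈ Set.Icc (0:ℝ) 1, HasDerivWithinAt (fun s => F' (γ s) w)
      (F'' (γ s) w w) (Set.Icc (0:ℝ) 1) s := by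
    intro s hs
    have h1 : HasDerivWithinAt (fun s => F' (γ s)) (F'' (γ s) w) (Set.Icc (0:ℝ) 1) s :=
      (hdF' (γ s) (hγmem s hs)).comp_hasDerivWithinAt s (hγd s) hγmaps
    have h2 := h1.clm_apply (hasDerivWithinAt_const _ _ w)
    simpa using h2
  -- derivative of s ↦ F (γ s)
  have hg : ∀ s ∈ Set.Icc (0:ℝ) 1, HasDerivWithinAt (fun s => F (γ s))
      (F' (γ s) w) (Set.Icc (0:ℝ) 1) s := by
    intro s hs
    exact (hdF (γ s) (hγmem s hs)).comp_hasDerivWithinAt s (hγd s) hγmaps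
  have h0 : F' (γ 0) w = 0 := by rw [hγ0, hM0]; simp
  -- upper bound on the directional derivative along the segment
  have hupper : ∀ s ∈ Set.Icc (0:ℝ) 1, F' (γ s) w ≤ -c₀ * ‖w‖ ^ 2 * s := by
    intro s hs
    have hsub : Set.Icc (0:ℝ) s ⊆ Set.Icc (0:ℝ) 1 := Set.Icc_subset_Icc le_rfl hs.2
    have := auxBound (F := fun s => F' (γ s) w) (F' := fun s => F'' (γ s) w w)
      (C := -c₀ * ‖w‖ ^ 2) hs.1
      (fun t ht => (hh t (hsub ht)).mono hsub)
      (fun t ht => (hH (γ t) (hγmem t (hsub ht)) w).2)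
    rw [h0] at this
    linarith
  have hlower : ∀ s ∈ Set.Icc (0:ℝ) 1, -((1 / c₀) * ‖w‖ ^ 2 * s) ≤ F' (γ s) w := by
    intro s hs
    have hsub : Set.Icc (0:ℝ) s ⊆ Set.Icc (0:ℝ) 1 := Set.Icc_subset_Icc le_rfl hs.2
    have := auxBound (F := fun s => -(F' (γ s) w)) (F' := fun s => -(F'' (γ s) w w))
      (C := (1 / c₀) * ‖w‖ ^ 2) hs.1
      (fun t ht => ((hh t (hsub ht)).mono hsub).neg)
      (fun t ht => by have := (hH (γ t) (hγmem t (hsub ht)) w).1; linarith)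
    rw [h0] at this
    simp only [neg_zero] at this
    linarith
  have hd1 : γ 1 = u := hγ1
  refine ⟨?_, ?_, ?_⟩
  · have := hupper 1 (Set.right_mem_Icc.2 zero_le_one)
    rw [hγ1] at this
    linarith
  · -- F u ≤ F M - c₀/2 ‖w‖²
    have key : ∀ t ∈ Set.Icc (0:ℝ) 1, HasDerivWithinAt
        (fun s => F (γ s) + c₀ / 2 * ‖w‖ ^ 2 * s ^ 2)
        (F' (γ t) w + c₀ / 2 * ‖w‖ ^ 2 * (2 * t)) (Set.Icc (0:ℝ) 1) t := by
      intro t ht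
      have hp : HasDerivWithinAt (fun s : ℝ => c₀ / 2 * ‖w‖ ^ 2 * s ^ 2)
          (c₀ / 2 * ‖w‖ ^ 2 * (2 * t)) (Set.Icc (0:ℝ) 1) t := by
        simpa using ((hasDerivAt_pow 2 t).const_mul (c₀ / 2 * ‖w‖ ^ 2)).hasDerivWithinAt
      exact (hg t ht).add hp
    have := auxBound (C := (0:ℝ)) zero_le_one key (by
      intro t ht
      have := hupper t ht
      nlinarith [this])
    rw [hγ1, hγ0] at this
    norm_num at this
    linarith
  · have key : ∀ t ∈ Set.Icc (0:ℝ) 1, HasDerivWithinAt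
        (fun s => -(F (γ s)) - 1 / (2 * c₀) * ‖w‖ ^ 2 * s ^ 2)
        (-(F' (γ t) w) - 1 / (2 * c₀) * ‖w‖ ^ 2 * (2 * t)) (Set.Icc (0:ℝ) 1) t := by
      intro t ht
      have hp : HasDerivWithinAt (fun s : ℝ => 1 / (2 * c₀) * ‖w‖ ^ 2 * s ^ 2)
          (1 / (2 * c₀) * ‖w‖ ^ 2 * (2 * t)) (Set.Icc (0:ℝ) 1) t := by
        simpa using ((hasDerivAt_pow 2 t).const_mul (1 / (2 * c₀) * ‖w‖ ^ 2)).hasDerivWithinAt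
      exact ((hg t ht).neg).sub hp
    have := auxBound (C := (0:ℝ)) zero_le_one key (by
      intro t ht
      have h1 := hlower t ht
      have h2 : 1 / (2 * c₀) * ‖w‖ ^ 2 * (2 * t) = 1 / c₀ * ‖w‖ ^ 2 * t := by
        field_simp
      rw [h2]
      linarith)
    rw [hγ1, hγ0] at this
    norm_num at this
    have hx : (1:ℝ) / (2 * c₀) = c₀⁻¹ * (1 / 2) := by
      field_simp
    rw [hx]
    linarith

private lemma sqrtLe {a x : ℝ} (ha : 0 ≤ a) (hx : 0 ≤ x) (h : a ^ 2 ≤ x ^ 2) : a ≤ x := by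
  nlinarith

set_option maxHeartbeats 2000000 in
open Metric in
/-- Uniform deformation lemma (Marques–Neves Lemma 4.5 / Lemma A.1): for a continuous
compact family of uniformly concave functions on the closed unit ball with maxima in
`B_{c₀/√10}`, flowing for a uniform time `T` along `−(1−|u|²)∇fᵂ` moves every point at
distance at least `δ` from the maximum to a point of value `< fᵂ(0) − c₀/10` and of
norm `> c₀/4`. -/
theorem stmt_4 {k : ℕ} {K : Type*} [MetricSpace K] [CompactSpace K]
    (f : K → EuclideanSpace ℝ (Fin k) → ℝ)
    (f' : K → EuclideanSpace ℝ (Fin k) → (EuclideanSpace ℝ (Fin k) →L[ℝ] ℝ))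
    (f'' : K → EuclideanSpace ℝ (Fin k) →
      (EuclideanSpace ℝ (Fin k) →L[ℝ] EuclideanSpace ℝ (Fin k) →L[ℝ] ℝ))
    (grad : K → EuclideanSpace ℝ (Fin k) → EuclideanSpace ℝ (Fin k))
    (c₀ : ℝ) (hc₀ : c₀ ∈ Set.Ioo (0 : ℝ) 1)
    -- derivatives
    (hf' : ∀ ω, ∀ u ∈ closedBall (0 : EuclideanSpace ℝ (Fin k)) 1,
      HasFDerivWithinAt (f ω) (f' ω u) (closedBall 0 1) u)
    (hf'' : ∀ ω, ∀ u ∈ closedBall (0 : EuclideanSpace ℝ (Fin k)) 1,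
      HasFDerivWithinAt (f' ω) (f'' ω u) (closedBall 0 1) u)
    (hgrad : ∀ ω, ∀ u ∈ closedBall (0 : EuclideanSpace ℝ (Fin k)) 1,
      ∀ w : EuclideanSpace ℝ (Fin k), inner ℝ (grad ω u) w = f' ω u w)
    -- continuity in the C² topology (joint continuity of f and its derivatives)
    (hcont : Continuous fun p : K × EuclideanSpace ℝ (Fin k) => f p.1 p.2)
    (hcont' : Continuous fun p : K × EuclideanSpace ℝ (Fin k) => f' p.1 p.2)
    (hcont'' : Continuous fun p : K × EuclideanSpace ℝ (Fin k) => f'' p.1 p.2)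
    -- pinched negative definite Hessian
    (hHess : ∀ ω, ∀ u ∈ closedBall (0 : EuclideanSpace ℝ (Fin k)) 1,
      ∀ w : EuclideanSpace ℝ (Fin k),
        -(1 / c₀) * ‖w‖ ^ 2 ≤ f'' ω u w w ∧ f'' ω u w w ≤ -c₀ * ‖w‖ ^ 2)
    -- unique maxima, lying in the ball of radius c₀/√10
    (m : K → EuclideanSpace ℝ (Fin k))
    (hm : ∀ ω, m ω ∈ closedBall (0 : EuclideanSpace ℝ (Fin k)) 1)
    (hmsmall : ∀ ω, ‖m ω‖ ≤ c₀ / Real.sqrt 10)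
    (hmax : ∀ ω, ∀ u ∈ closedBall (0 : EuclideanSpace ℝ (Fin k)) 1, f ω u ≤ f ω (m ω))
    (huniq : ∀ ω, ∀ u ∈ closedBall (0 : EuclideanSpace ℝ (Fin k)) 1,
      f ω u = f ω (m ω) → u = m ω)
    -- the gradient flows
    (φ : K → EuclideanSpace ℝ (Fin k) → ℝ → EuclideanSpace ℝ (Fin k))
    (hφ0 : ∀ ω, ∀ v ∈ closedBall (0 : EuclideanSpace ℝ (Fin k)) 1, φ ω v 0 = v)
    (hφmem : ∀ ω, ∀ v ∈ closedBall (0 : EuclideanSpace ℝ (Fin k)) 1,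
      ∀ t : ℝ, 0 ≤ t → φ ω v t ∈ closedBall (0 : EuclideanSpace ℝ (Fin k)) 1)
    (hφflow : ∀ ω, ∀ v ∈ closedBall (0 : EuclideanSpace ℝ (Fin k)) 1,
      ∀ t : ℝ, 0 ≤ t →
        HasDerivAt (φ ω v) (-(1 - ‖φ ω v t‖ ^ 2) • grad ω (φ ω v t)) t) :
    ∀ δ : ℝ, 0 < δ → δ < 1 / 4 → ∃ T : ℝ, 0 ≤ T ∧
      ∀ ω : K, ∀ v ∈ closedBall (0 : EuclideanSpace ℝ (Fin k)) 1,
        δ ≤ ‖v - m ω‖ →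
          f ω (φ ω v T) < f ω 0 - c₀ / 10 ∧ c₀ / 4 < ‖φ ω v T‖ := by
  intro δ hδ0 hδ4
  obtain ⟨hc0, hc1⟩ := hc₀
  have h2c : (0:ℝ) < 2 * c₀ := by linarith
  have hsqrt10 : (25:ℝ)/8 ≤ Real.sqrt 10 := by
    rw [Real.le_sqrt (by norm_num) (by norm_num)]
    norm_num
  have hm25 : ∀ ω, ‖m ω‖ ≤ 8/25 * c₀ := by
    intro ω
    have h1 : c₀ / Real.sqrt 10 ≤ c₀ / (25/8) :=
      div_le_div_of_nonneg_left hc0.le (by norm_num) hsqrt10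
    have h2 : c₀ / (25/8) = 8/25 * c₀ := by ring
    linarith [hmsmall ω]
  have hmsq : ∀ ω, ‖m ω‖ ^ 2 ≤ c₀ ^ 2 / 10 := by
    intro ω
    have h1 := pow_le_pow_left₀ (norm_nonneg (m ω)) (hmsmall ω) 2
    have h2 : (c₀ / Real.sqrt 10) ^ 2 = c₀ ^ 2 / 10 := by
      rw [div_pow, Real.sq_sqrt (by norm_num : (0:ℝ) ≤ 10)]
    linarith
  -- the derivative vanishes at the maximum point
  have hF'm : ∀ ω, f' ω (m ω) = 0 := by
    intro ω
    have hlt : ‖m ω‖ < 1 := by have := hm25 ω; nlinarith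
    have hball : closedBall (0 : EuclideanSpace ℝ (Fin k)) 1 ∈ 𝓝 (m ω) :=
      Filter.mem_of_superset (isOpen_ball.mem_nhds (mem_ball_zero_iff.2 hlt))
        ball_subset_closedBall
    have hloc : IsLocalMax (f ω) (m ω) :=
      Filter.eventually_of_mem hball (fun u hu => hmax ω u hu)
    exact hloc.hasFDerivAt_eq_zero ((hf' ω (m ω) (hm ω)).hasFDerivAt hball)
  have est : ∀ ω, ∀ u ∈ closedBall (0 : EuclideanSpace ℝ (Fin k)) 1,
      f' ω u (u - m ω) ≤ -c₀ * ‖u - m ω‖ ^ 2 ∧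
      f ω u ≤ f ω (m ω) - c₀ / 2 * ‖u - m ω‖ ^ 2 ∧
      f ω (m ω) - 1 / (2 * c₀) * ‖u - m ω‖ ^ 2 ≤ f ω u :=
    fun ω u hu => segEst hc0 (hf' ω) (hf'' ω) (hHess ω) (hm ω) (hF'm ω) hu
  -- cleared version of the lower quadratic estimate
  have est3 : ∀ ω, ∀ u ∈ closedBall (0 : EuclideanSpace ℝ (Fin k)) 1,
      (f ω (m ω) - f ω u) * (2 * c₀) ≤ ‖u - m ω‖ ^ 2 := by
    intro ω u hu
    have h := (est ω u hu).2.2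
    have h2 : f ω (m ω) - f ω u ≤ ‖u - m ω‖ ^ 2 / (2 * c₀) := by
      have : 1 / (2 * c₀) * ‖u - m ω‖ ^ 2 = ‖u - m ω‖ ^ 2 / (2 * c₀) := by ring
      linarith [h, this.le, this.ge]
    exact (le_div_iff₀ h2c).1 h2
  -- lower bound on the gradient
  have E4 : ∀ ω, ∀ u ∈ closedBall (0 : EuclideanSpace ℝ (Fin k)) 1,
      c₀ * ‖u - m ω‖ ≤ ‖grad ω u‖ := by
    intro ω u hu
    have h1 := (est ω u hu).1
    have h2 : (inner ℝ (grad ω u) (u - m ω) : ℝ) = f' ω u (u - m ω) := hgrad ω u hu _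
    have h4 : (inner ℝ (grad ω u) (m ω - u) : ℝ) = - inner ℝ (grad ω u) (u - m ω) := by
      rw [← inner_neg_right, neg_sub]
    have h3 : (inner ℝ (grad ω u) (m ω - u) : ℝ) ≤ ‖grad ω u‖ * ‖m ω - u‖ :=
      real_inner_le_norm _ _
    have h5 : ‖m ω - u‖ = ‖u - m ω‖ := norm_sub_rev _ _
    rw [h5] at h3
    by_cases h : ‖u - m ω‖ = 0
    · rw [h, mul_zero]
      exact norm_nonneg _
    · have hlt : 0 < ‖u - m ω‖ := lt_of_le_of_ne (norm_nonneg _) (Ne.symm h)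
      have hp : ‖u - m ω‖ ^ 2 = ‖u - m ω‖ * ‖u - m ω‖ := by ring
      have hchain : c₀ * ‖u - m ω‖ * ‖u - m ω‖ ≤ ‖grad ω u‖ * ‖u - m ω‖ := by
        nlinarith [h1, h2, h3, h4, hp]
      exact le_of_mul_le_mul_right hchain hlt
  -- the uniform time
  refine ⟨1000 / (c₀ ^ 5 * δ ^ 2), by positivity, ?_⟩
  set T : ℝ := 1000 / (c₀ ^ 5 * δ ^ 2) with hTdef
  have hT0 : (0:ℝ) ≤ T := by positivity
  intro ω v hv hδv
  have hΦmem : ∀ t, 0 ≤ t → φ ω v t ∈ closedBall (0 : EuclideanSpace ℝ (Fin k)) 1 :=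
    fun t ht => hφmem ω v hv t ht
  have hΦnorm : ∀ t, 0 ≤ t → ‖φ ω v t‖ ≤ 1 :=
    fun t ht => mem_closedBall_zero_iff.1 (hΦmem t ht)
  -- derivative of f along the flow
  have hD : ∀ a b : ℝ, 0 ≤ a → ∀ t ∈ Set.Icc a b,
      HasDerivWithinAt (fun t => f ω (φ ω v t))
        (-(1 - ‖φ ω v t‖ ^ 2) * ‖grad ω (φ ω v t)‖ ^ 2) (Set.Icc a b) t := by
    intro a b ha t ht
    have hmem := hΦmem t (ha.trans ht.1)
    have hmaps : Set.MapsTo (φ ω v) (Set.Icc a b)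
        (closedBall (0 : EuclideanSpace ℝ (Fin k)) 1) :=
      fun s hs => hΦmem s (ha.trans hs.1)
    have h1 := (hf' ω (φ ω v t) hmem).comp_hasDerivWithinAt t
      ((hφflow ω v hv t (ha.trans ht.1)).hasDerivWithinAt) hmaps
    have h2 : f' ω (φ ω v t) (-(1 - ‖φ ω v t‖ ^ 2) • grad ω (φ ω v t)) =
        -(1 - ‖φ ω v t‖ ^ 2) * ‖grad ω (φ ω v t)‖ ^ 2 := by
      rw [map_smul, smul_eq_mul, ← hgrad ω _ hmem, real_inner_self_eq_norm_sq]
    rw [← h2]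
    exact h1
  -- f decreases along the flow
  have hmono : ∀ a b : ℝ, 0 ≤ a → a ≤ b → f ω (φ ω v b) ≤ f ω (φ ω v a) := by
    intro a b ha hab
    have hbd := auxBound (C := (0:ℝ)) hab (hD a b ha) (by
      intro t ht
      have h1 : ‖φ ω v t‖ ≤ 1 := hΦnorm t (ha.trans ht.1)
      have h2 : (0:ℝ) ≤ ‖φ ω v t‖ := norm_nonneg _
      have h3 : ‖φ ω v t‖ ^ 2 ≤ 1 := by nlinarith
      nlinarith [sq_nonneg ‖grad ω (φ ω v t)‖, h3])
    linarith
  have hΦ0 : φ ω v 0 = v := hφ0 ω v hv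
  -- value at the initial point
  have hfv : f ω v ≤ f ω (m ω) - c₀ / 2 * δ ^ 2 := by
    have hE := (est ω v hv).2.1
    have hsq : δ ^ 2 ≤ ‖v - m ω‖ ^ 2 := by nlinarith [hδv, hδ0]
    nlinarith [hE]
  -- the escape claim
  have hescape : ∃ t₀ ∈ Set.Icc (0:ℝ) T, (19:ℝ)/20 ≤ ‖φ ω v t₀‖ := by
    by_contra hcon
    push_neg at hcon
    have hfle : ∀ t ∈ Set.Icc (0:ℝ) T, f ω (φ ω v t) ≤ f ω (m ω) - c₀ / 2 * δ ^ 2 := by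
      intro t ht
      have := hmono 0 t le_rfl ht.1
      rw [hΦ0] at this
      linarith
    have hdist : ∀ t ∈ Set.Icc (0:ℝ) T, c₀ * δ ≤ ‖φ ω v t - m ω‖ := by
      intro t ht
      have h3 := est3 ω (φ ω v t) (hΦmem t ht.1)
      have h4 := hfle t ht
      have hd2 : (c₀ * δ) ^ 2 ≤ ‖φ ω v t - m ω‖ ^ 2 := by nlinarith [h3, h4]
      exact sqrtLe (by positivity) (norm_nonneg _) hd2
    have hrate : ∀ t ∈ Set.Icc (0:ℝ) T,
        -(1 - ‖φ ω v t‖ ^ 2) * ‖grad ω (φ ω v t)‖ ^ 2 ≤ -(39/400 * (c₀ ^ 4 * δ ^ 2)) := by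
      intro t ht
      have h6 := E4 ω (φ ω v t) (hΦmem t ht.1)
      have h7 := hdist t ht
      have hn := hcon t ht
      have hnn : (0:ℝ) ≤ ‖φ ω v t‖ := norm_nonneg _
      have hg : c₀ ^ 2 * δ ≤ ‖grad ω (φ ω v t)‖ := by nlinarith [h6, h7, hc0]
      have hgsq : (c₀ ^ 2 * δ) ^ 2 ≤ ‖grad ω (φ ω v t)‖ ^ 2 :=
        pow_le_pow_left₀ (by positivity) hg 2
      have h1mn : 39/400 ≤ 1 - ‖φ ω v t‖ ^ 2 := by nlinarith [hn, hnn]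
      have hprod : 39/400 * (c₀ ^ 4 * δ ^ 2) ≤ (1 - ‖φ ω v t‖ ^ 2) * ‖grad ω (φ ω v t)‖ ^ 2 := by
        have := mul_le_mul h1mn hgsq (by positivity) (by linarith)
        nlinarith [this]
      linarith
    have hfinal := auxBound (C := -(39/400 * (c₀ ^ 4 * δ ^ 2))) hT0 (hD 0 T le_rfl) hrate
    rw [hΦ0] at hfinal
    -- lower bound for f at φ T
    have h9 : ‖φ ω v T - m ω‖ ≤ 2 := by
      have := norm_sub_le (φ ω v T) (m ω)
      have h1 := hΦnorm T hT0
      have h2 := mem_closedBall_zero_iff.1 (hm ω)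
      linarith
    have h10 : ‖φ ω v T - m ω‖ ^ 2 ≤ 4 := by nlinarith [norm_nonneg (φ ω v T - m ω)]
    have h11 : f ω (m ω) - f ω (φ ω v T) ≤ 2 / c₀ := by
      have h3 := est3 ω (φ ω v T) (hΦmem T hT0)
      have h4 : f ω (m ω) - f ω (φ ω v T) ≤ 4 / (2 * c₀) :=
        (le_div_iff₀ h2c).2 (by linarith)
      have h5 : (4:ℝ) / (2 * c₀) = 2 / c₀ := by
        field_simp
        ring
      linarith
    have h12 : f ω v ≤ f ω (m ω) := hmax ω v hv
    have hTval : 39/400 * (c₀ ^ 4 * δ ^ 2) * (T - 0) = 195 / (2 * c₀) := by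
      rw [hTdef]
      field_simp
      ring
    have hgt : 2 / c₀ < 195 / (2 * c₀) := by
      have he : 195 / (2 * c₀) - 2 / c₀ = 191 / (2 * c₀) := by
        field_simp
        ring
      have hp : (0:ℝ) < 191 / (2 * c₀) := by positivity
      linarith
    linarith [hfinal, h11, h12, hTval.le, hTval.ge]
  obtain ⟨t₀, ht₀, hnorm19⟩ := hescape
  have hm8 : ‖m ω‖ ≤ 8/25 := by
    have := hm25 ω
    nlinarith
  have hd0 : (63:ℝ)/100 ≤ ‖φ ω v t₀ - m ω‖ := by
    have h1 := norm_sub_norm_le (φ ω v t₀) (m ω)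
    linarith
  have hft₀ : f ω (φ ω v t₀) ≤ f ω (m ω) - 3969/20000 * c₀ := by
    have hE := (est ω (φ ω v t₀) (hΦmem t₀ ht₀.1)).2.1
    have hsq : ((63:ℝ)/100) ^ 2 ≤ ‖φ ω v t₀ - m ω‖ ^ 2 := by nlinarith [hd0]
    nlinarith [hE, hsq, hc0]
  have hfT : f ω (φ ω v T) ≤ f ω (m ω) - 3969/20000 * c₀ :=
    le_trans (hmono t₀ T ht₀.1 ht₀.2) hft₀
  have h0mem : (0 : EuclideanSpace ℝ (Fin k)) ∈ closedBall (0 : EuclideanSpace ℝ (Fin k)) 1 :=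
    mem_closedBall_self zero_le_one
  constructor
  · -- f (φ T) < f 0 - c₀/10
    have h3 := est3 ω 0 h0mem
    have h5 : ‖(0 : EuclideanSpace ℝ (Fin k)) - m ω‖ ^ 2 ≤ c₀ ^ 2 / 10 := by
      rw [zero_sub, norm_neg]
      exact hmsq ω
    have h13 : f ω (m ω) - f ω 0 ≤ c₀ / 20 := by
      have h4 : f ω (m ω) - f ω 0 ≤ (c₀ ^ 2 / 10) / (2 * c₀) :=
        (le_div_iff₀ h2c).2 (by linarith)
      have h6 : (c₀ ^ 2 / 10) / (2 * c₀) = c₀ / 20 := by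
        field_simp
        ring
      linarith
    linarith [hfT, h13, hc0]
  · -- c₀/4 < ‖φ T‖
    have h3 := est3 ω (φ ω v T) (hΦmem T hT0)
    have hB : (63/100 * c₀) ^ 2 ≤ ‖φ ω v T - m ω‖ ^ 2 := by nlinarith [h3, hfT, hc0]
    have hnT : 63/100 * c₀ ≤ ‖φ ω v T - m ω‖ :=
      sqrtLe (by positivity) (norm_nonneg _) hB
    have h1 := norm_sub_le (φ ω v T) (m ω)
    have := hm25 ω
    linarith [h1, hnT, hc0]
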